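/- arXiv:1003.3514 — 6 statements merged into one kernel-verified Lean document; each statement's English description precedes it below -/
import Mathlib

section
/- For every integer L ≥ 1 and every real x, the transfer matrix t(x) is self-adjoint: its conjugate transpose equals itself. -/
open Matrix

noncomputable section

/-- ω = e^{2πi/3}. -/
def ω : ℂ := Complex.exp (2 * Real.pi * Complex.I / 3)

/-- The 3×3 matrix X with rows (0,0,1),(1,0,0),(0,1,0). -/
def Xmat : Matrix (Fin 3) (Fin 3) ℂ := !![0,0,1; 1,0,0; 0,1,0]

/-- The 3×3 matrix Z = diag(1, ω, ω⁻¹). -/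
def Zmat : Matrix (Fin 3) (Fin 3) ℂ := !![1,0,0; 0,ω,0; 0,0,ω⁻¹]

/-- The 6×6 L-operator, indexed by pairs (i,a), i ∈ Fin 2 (auxiliary), a ∈ Fin 3,
with blocks L¹₁ = xX, L¹₂ = Z, L²₁ = Z⁻¹ = Z², L²₂ = xX⁻¹ = xX². -/
def Lop (x : ℂ) : Matrix (Fin 2 × Fin 3) (Fin 2 × Fin 3) ℂ :=
  Matrix.of fun p q =>
    match p.1, q.1 with
    | 0, 0 => x * Xmat p.2 q.2
    | 0, 1 => Zmat p.2 q.2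
    | 1, 0 => (Zmat * Zmat) p.2 q.2
    | 1, 1 => x * (Xmat * Xmat) p.2 q.2

/-- The 2×2 matrix N_x(a,b) with (i,j) entry L(x)_{(i,a),(j,b)}. -/
def Nmat (x : ℂ) (a b : Fin 3) : Matrix (Fin 2) (Fin 2) ℂ :=
  Matrix.of fun i j => Lop x (i, a) (j, b)

/-- The transfer matrix t(x): entry (α,β) is the trace of
N_x(α_L,β_L)·N_x(α_{L-1},β_{L-1})⋯N_x(α₁,β₁). -/
def tTransfer (L : ℕ) (x : ℂ) : Matrix (Fin L → Fin 3) (Fin L → Fin 3) ℂ :=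
  Matrix.of fun α β =>
    Matrix.trace (((List.finRange L).reverse.map fun k => Nmat x (α k) (β k)).prod)

/-!
For real `x` the blocks of `L(x)` satisfy `(L^i_j)ᴴ = L^{σi}_{σj}`, where `σ` swaps the two
auxiliary indices: `X` is a permutation matrix, so `Xᴴ = X⁻¹ = X²`, and `Zᴴ = Z²` because
`conj ω = ω⁻¹ = ω²`. Entrywise, `conj N_x(b,a)` is `N_x(a,b)` with both indices relabelled by `σ`.
Conjugating the product defining `t(x)_{βα}` therefore yields the product defining `t(x)_{αβ}`
relabelled by `σ`, which has the same trace.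
-/

theorem star_trace_list_prod_of_map_star_eq_reindex {R ι n : Type*} [CommSemiring R] [StarRing R]
    [Fintype n] [DecidableEq n] (e : n ≃ n) (l : List ι) (M N : ι → Matrix n n R)
    (h : ∀ k, (M k).map star = reindex e e (N k)) :
    star (trace (l.map M).prod) = trace (l.map N).prod := by
  have hprod : ((l.map M).prod).map star = reindex e e (l.map N).prod := by
    rw [← coe_reindexAlgEquiv R R e, map_list_prod, List.map_map]
    change (starRingEnd R).mapMatrix (l.map M).prod = _
    rw [map_list_prod, List.map_map]
    exact congrArg List.prod (List.map_congr_left fun k _ => h k)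
  rw [← starRingEnd_apply, AddMonoidHom.map_trace]
  change trace ((l.map M).prod.map star) = _
  rw [hprod]
  exact e.symm.sum_comp fun i => (l.map N).prod i i

theorem ω_isPrimitiveRoot : IsPrimitiveRoot ω 3 := by
  simpa [ω] using Complex.isPrimitiveRoot_exp 3 (by norm_num)

theorem conj_ω : starRingEnd ℂ ω = ω⁻¹ :=
  (Complex.inv_eq_conj (ω_isPrimitiveRoot.norm'_eq_one (by norm_num))).symm

theorem inv_ω : ω⁻¹ = ω * ω :=
  inv_eq_of_mul_eq_one_right (by rw [← ω_isPrimitiveRoot.pow_eq_one]; ring)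

theorem Xmat_conjTranspose : Xmatᴴ = Xmat * Xmat := by
  ext i j; fin_cases i <;> fin_cases j <;> simp [Xmat]

theorem Zmat_conjTranspose : Zmatᴴ = Zmat * Zmat := by
  ext i j; fin_cases i <;> fin_cases j <;> simp [Zmat, conj_ω, inv_ω]

theorem Nmat_map_star (x : ℝ) (a b : Fin 3) :
    (Nmat x b a).map star = reindex (Equiv.swap 0 1) (Equiv.swap 0 1) (Nmat x a b) := by
  ext i j; fin_cases i <;> fin_cases j <;>
    simp [Nmat, Lop, ← Xmat_conjTranspose, ← Zmat_conjTranspose]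

theorem transfer_selfAdjoint_general (L : ℕ) (x : ℝ) :
    (tTransfer L (x : ℂ))ᴴ = tTransfer L (x : ℂ) := by
  ext α β
  exact star_trace_list_prod_of_map_star_eq_reindex (Equiv.swap 0 1) _ _ _
    fun k => Nmat_map_star x (α k) (β k)

/-- For every integer L ≥ 1 and every real x, the transfer matrix t(x)
is self-adjoint: its conjugate transpose equals itself. -/
theorem transfer_selfAdjoint (L : ℕ) (hL : 1 ≤ L) (x : ℝ) :
    (tTransfer L (x : ℂ))ᴴ = tTransfer L (x : ℂ) :=
  transfer_selfAdjoint_general L x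

end
end

section
/- For all nonzero x, y ∈ ℂ, the relation r₁₂(x/y) L₁₃(x) L₂₃(y) = L₂₃(y) L₁₃(x) r₁₂(x/y) holds as an identity of 12×12 matrices acting on ℂ²⊗ℂ²⊗ℂ³. -/
/-! In block form with respect to the auxiliary spaces, `L(x) = (xX, Z; Z², xX²)`, and the
relation splits into sixteen identities
`∑ r^{ij}_{ab} L^a_{i'}(x) L^b_{j'}(y) = ∑ L^j_b(y) L^i_a(x) r^{ab}_{i'j'}` between 3×3 matrices.
They only use the Weyl relation `ZX = ωXZ`: normal ordering every monomial as `XᵃZᵇ` turns each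
block identity into a comparison of scalar coefficients, rational functions of `x`, `y`, `ω`
that agree because `ω² + ω + 1 = 0`. So the relation holds for any `X`, `Z` in any algebra
satisfying `ZX = ωXZ`. -/

open Matrix

noncomputable section

/-- Lexicographic index map from Fin 2 pairs to Fin 4. -/
def idx4 : Fin 2 × Fin 2 → Fin 4 :=
  fun p => ⟨2 * p.1.val + p.2.val, by have := p.1.isLt; have := p.2.isLt; omega⟩

/-- The symmetric six-vertex r-matrix (specialised), as a 4×4 matrix. -/
def r4 (z : ℂ) : Matrix (Fin 4) (Fin 4) ℂ :=
  !![ω * z - ω⁻¹ * z⁻¹, 0, 0, 0;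
     0, z - z⁻¹, ω - ω⁻¹, 0;
     0, ω - ω⁻¹, z - z⁻¹, 0;
     0, 0, 0, ω * z - ω⁻¹ * z⁻¹]

/-- r(z) indexed by pairs (i,j), i,j ∈ Fin 2. -/
def rop (z : ℂ) : Matrix (Fin 2 × Fin 2) (Fin 2 × Fin 2) ℂ :=
  Matrix.of fun p q => r4 z (idx4 p) (idx4 q)

/-- r₁₂ acting on ℂ²⊗ℂ²⊗ℂ³ (factors 1 and 2). -/
def r12 (u : ℂ) : Matrix (Fin 2 × Fin 2 × Fin 3) (Fin 2 × Fin 2 × Fin 3) ℂ :=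
  Matrix.of fun p q => rop u (p.1, p.2.1) (q.1, q.2.1) * (if p.2.2 = q.2.2 then 1 else 0)

/-- L₁₃ acting on ℂ²⊗ℂ²⊗ℂ³ (factors 1 and 3). -/
def L13 (u : ℂ) : Matrix (Fin 2 × Fin 2 × Fin 3) (Fin 2 × Fin 2 × Fin 3) ℂ :=
  Matrix.of fun p q => Lop u (p.1, p.2.2) (q.1, q.2.2) * (if p.2.1 = q.2.1 then 1 else 0)

/-- L₂₃ acting on ℂ²⊗ℂ²⊗ℂ³ (factors 2 and 3). -/
def L23 (u : ℂ) : Matrix (Fin 2 × Fin 2 × Fin 3) (Fin 2 × Fin 2 × Fin 3) ℂ :=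
  Matrix.of fun p q => Lop u p.2 q.2 * (if p.1 = q.1 then 1 else 0)

theorem omega_sq_add_omega_add_one : ω ^ 2 + ω + 1 = 0 := by
  have h := (Complex.isPrimitiveRoot_exp 3 (by norm_num)).geom_sum_eq_zero (by norm_num)
  simp only [Finset.sum_range_succ, Finset.sum_range_zero, pow_zero, pow_one, Nat.cast_ofNat] at h
  unfold ω
  linear_combination h

theorem Zmat_mul_Xmat : Zmat * Xmat = ω • (Xmat * Zmat) := by
  have h3 : ω ^ 3 = 1 := by linear_combination (ω - 1) * omega_sq_add_omega_add_one
  have hω : ω ≠ 0 := by rintro h; simp [h] at h3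
  ext a b
  fin_cases a <;> fin_cases b <;> simp [Zmat, Xmat, Matrix.mul_apply, Fin.sum_univ_three, hω]
  exact inv_eq_of_mul_eq_one_right (by linear_combination h3)

section Weyl

variable {K A : Type*} [Field K] [Ring A] [Algebra K A]

def weylL (X Z : A) (x : K) : Matrix (Fin 2) (Fin 2) A :=
  !![x • X, Z; Z * Z, x • (X * X)]

def sixVertexR (w z : K) : Matrix (Fin 2 × Fin 2) (Fin 2 × Fin 2) K :=
  Matrix.of fun p q =>
    match p, q with
    | (0, 0), (0, 0) | (1, 1), (1, 1) => w * z - w⁻¹ * z⁻¹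
    | (0, 1), (0, 1) | (1, 0), (1, 0) => z - z⁻¹
    | (0, 1), (1, 0) | (1, 0), (0, 1) => w - w⁻¹
    | _, _ => 0

theorem mul_mul_eq_smul_of_weyl {w : K} {X Z : A} (h : Z * X = w • (X * Z)) (M : A) :
    Z * (X * M) = w • (X * (Z * M)) := by
  rw [← mul_assoc, h, smul_mul_assoc, mul_assoc]

theorem weylL_rll {w : K} (hw : w ^ 2 + w + 1 = 0) {X Z : A} (h : Z * X = w • (X * Z))
    {x y : K} (hx : x ≠ 0) (hy : y ≠ 0) (i j i' j' : Fin 2) :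
    ∑ a, ∑ b, sixVertexR w (x / y) (i, j) (a, b) • (weylL X Z x a i' * weylL X Z y b j') =
      ∑ a, ∑ b, sixVertexR w (x / y) (a, b) (i', j') • (weylL X Z y j b * weylL X Z x i a) := by
  have hw0 : w ≠ 0 := by rintro rfl; simp at hw
  fin_cases i <;> fin_cases j <;> fin_cases i' <;> fin_cases j' <;>
  · simp only [Fin.sum_univ_two, sixVertexR, weylL, Matrix.of_apply, Matrix.cons_val',
      Matrix.cons_val_zero, Matrix.cons_val_one, Matrix.empty_val', Matrix.cons_val_fin_one,
      Fin.isValue, Fin.zero_eta, Fin.mk_one, zero_smul, add_zero, zero_add, smul_mul_assoc,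
      mul_smul_comm, mul_assoc, smul_smul, mul_mul_eq_smul_of_weyl h, h]
    match_scalars <;> field_simp <;> grind

end Weyl

theorem rop_eq_sixVertexR (z : ℂ) : rop z = sixVertexR ω z := by
  ext ⟨i, j⟩ ⟨i', j'⟩
  fin_cases i <;> fin_cases j <;> fin_cases i' <;> fin_cases j' <;> rfl

theorem Lop_eq_comp_weylL (x : ℂ) : Lop x = Matrix.comp _ _ _ _ _ (weylL Xmat Zmat x) := by
  ext ⟨i, a⟩ ⟨j, b⟩
  fin_cases i <;> fin_cases j <;> rfl

theorem r12_mul_L13_mul_L23_apply (u x y : ℂ) (i j i' j' : Fin 2) (k k' : Fin 3) :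
    (r12 u * L13 x * L23 y) (i, j, k) (i', j', k') =
      (∑ a, ∑ b, rop u (i, j) (a, b) • (weylL Xmat Zmat x a i' * weylL Xmat Zmat y b j')) k k' := by
  rw [Matrix.mul_assoc]
  simp [Matrix.mul_apply, Fintype.sum_prod_type, r12, L13, L23, Lop_eq_comp_weylL,
    Matrix.sum_apply, Finset.mul_sum]

theorem L23_mul_L13_mul_r12_apply (u x y : ℂ) (i j i' j' : Fin 2) (k k' : Fin 3) :
    (L23 y * L13 x * r12 u) (i, j, k) (i', j', k') =
      (∑ a, ∑ b, rop u (a, b) (i', j') • (weylL Xmat Zmat y j b * weylL Xmat Zmat x i a)) k k' := by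
  simp [Matrix.mul_apply, Fintype.sum_prod_type, r12, L13, L23, Lop_eq_comp_weylL,
    Matrix.sum_apply, Finset.mul_sum, mul_assoc, mul_comm, mul_left_comm]

/-- r₁₂(x/y) L₁₃(x) L₂₃(y) = L₂₃(y) L₁₃(x) r₁₂(x/y). -/
theorem r_L_L_intertwining (x y : ℂ) (hx : x ≠ 0) (hy : y ≠ 0) :
    r12 (x / y) * L13 x * L23 y = L23 y * L13 x * r12 (x / y) := by
  ext ⟨i, j, k⟩ ⟨i', j', k'⟩
  rw [r12_mul_L13_mul_L23_apply, L23_mul_L13_mul_r12_apply, rop_eq_sixVertexR,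
    weylL_rll omega_sq_add_omega_add_one Zmat_mul_Xmat hx hy]
end
end

section
/- For every x ∈ ℂ, L(x) · (L(−ω⁻¹x))^{t₂} = (1 − ω⁻¹x²) I₆, where for a 6×6 matrix M indexed by pairs (i,a), i ∈ {1,2}, a ∈ {1,2,3}, the partial transpose in the second (three-dimensional) factor is (M^{t₂})_{(i,a),(j,b)} = M_{(i,b),(j,a)}. Equivalently, [L(x)⁻¹]^{t₂} = (1 − ω⁻¹x²)⁻¹ L(−ω⁻¹x) whenever 1 − ω⁻¹x² ≠ 0. -/
set_option linter.unreachableTactic false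
set_option linter.unusedTactic false


open Matrix

noncomputable section

/-- Partial transposition in the second (three-dimensional) factor:
(M^{t₂})_{(i,a),(j,b)} = M_{(i,b),(j,a)}. -/
def pt2L (M : Matrix (Fin 2 × Fin 3) (Fin 2 × Fin 3) ℂ) :
    Matrix (Fin 2 × Fin 3) (Fin 2 × Fin 3) ℂ :=
  Matrix.of fun p q => M (p.1, q.2) (q.1, p.2)

set_option maxHeartbeats 1600000 in
/-- L(x) · (L(−ω⁻¹x))^{t₂} = (1 − ω⁻¹x²) I₆ for every x ∈ ℂ. -/
theorem L_crossing (x : ℂ) :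
    Lop x * pt2L (Lop (-(ω⁻¹ * x)))
      = (1 - ω⁻¹ * x ^ 2) • (1 : Matrix (Fin 2 × Fin 3) (Fin 2 × Fin 3) ℂ) := by
  have hω3 : ω ^ 3 = 1 := by
    rw [ω, ← Complex.exp_nat_mul]
    push_cast
    rw [show (3 : ℂ) * (2 * Real.pi * Complex.I / 3) = 2 * Real.pi * Complex.I by ring]
    exact Complex.exp_two_pi_mul_I
  have hinv : ω⁻¹ = ω ^ 2 :=
    inv_eq_of_mul_eq_one_right (by linear_combination hω3)
  ext ⟨i, a⟩ ⟨j, b⟩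
  fin_cases i <;> fin_cases j <;> fin_cases a <;> fin_cases b
  all_goals
    simp [Lop, pt2L, mul_apply, Xmat, Zmat, Fintype.sum_prod_type, Fin.sum_univ_succ,
      Matrix.one_apply, Prod.ext_iff, Matrix.vecHead, Matrix.vecTail, hinv]
  all_goals
    (first
      | ring1
      | linear_combination hω3
      | linear_combination (ω ^ 3 + 1) * hω3
      | linear_combination (-x) * hω3
      | linear_combination x * hω3
      | linear_combination (-x * ω) * hω3
      | linear_combination (x * ω) * hω3
      | linear_combination (-x * ω ^ 2) * hω3
      | linear_combination (x * ω ^ 2) * hω3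
      | linear_combination (-x * ω ^ 3) * hω3
      | linear_combination (x * ω ^ 3) * hω3
      | linear_combination (-x * (ω ^ 3 + 1)) * hω3
      | linear_combination (x * (ω ^ 3 + 1)) * hω3
      | linear_combination (-x * ω * (ω ^ 3 + 1)) * hω3
      | linear_combination (x * ω * (ω ^ 3 + 1)) * hω3
      | linear_combination (-x * ω ^ 2 * (ω ^ 3 + 1)) * hω3
      | linear_combination (x * ω ^ 2 * (ω ^ 3 + 1)) * hω3
      | linear_combination (ω + 1) * hω3
      | linear_combination ω * hω3)

end
end

section
/- For all g, h ∈ D₃, the local Hamiltonian 𝔥 commutes with the coproduct action: 𝔥 · Δ(g h*) = Δ(g h*) · 𝔥 as 9×9 matrices. -/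
open Matrix
open scoped Kronecker

noncomputable section

/-- π(σ): 3×3 matrix with rows (0,1,0),(0,0,1),(1,0,0). -/
def Smat : Matrix (Fin 3) (Fin 3) ℂ := !![0,1,0; 0,0,1; 1,0,0]

/-- π(τ): 3×3 matrix with rows (1,0,0),(0,0,1),(0,1,0). -/
def Tmat : Matrix (Fin 3) (Fin 3) ℂ := !![1,0,0; 0,0,1; 0,1,0]

/-- The representation π_{(3,+)} on group elements of D₃ = DihedralGroup 3,
extended multiplicatively from π(σ) = Smat, π(τ) = Tmat.
Here `DihedralGroup.r i` = σ^i and `DihedralGroup.sr i` = τσ^i. -/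
def pig : DihedralGroup 3 → Matrix (Fin 3) (Fin 3) ℂ
  | DihedralGroup.r i => Smat ^ i.val
  | DihedralGroup.sr i => Tmat * Smat ^ i.val

/-- The representation π_{(3,+)} on dual elements: π((σ^i)*) = 0 and
π((σ^i τ)*) = E^{i+1}_{i+1}.  Since σ^i τ = `DihedralGroup.sr (-i)`, the dual
of `sr j` acts as the matrix unit at position (-j).val. -/
def pidual : DihedralGroup 3 → Matrix (Fin 3) (Fin 3) ℂ
  | DihedralGroup.r _ => 0
  | DihedralGroup.sr j =>
      Matrix.single ⟨(-j).val, ZMod.val_lt _⟩ ⟨(-j).val, ZMod.val_lt _⟩ 1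

/-- The coproduct action Δ(g h*) on ℂ³⊗ℂ³. -/
def copr (g h : DihedralGroup 3) : Matrix (Fin 3 × Fin 3) (Fin 3 × Fin 3) ℂ :=
  ∑ k : DihedralGroup 3, (pig g * pidual (k⁻¹ * h)) ⊗ₖ (pig g * pidual k)

/-- The local two-site Hamiltonian 𝔥 = Σ_γ i(E^{γ(1)}_{γ(2)} ⊗ E^{γ(2)}_{γ(3)}
− E^{γ(2)}_{γ(3)} ⊗ E^{γ(1)}_{γ(2)}), summed over permutations γ of {1,2,3}. -/
def hloc : Matrix (Fin 3 × Fin 3) (Fin 3 × Fin 3) ℂ :=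
  ∑ γ : Equiv.Perm (Fin 3),
    Complex.I •
      ((Matrix.single (γ 0) (γ 1) (1 : ℂ)) ⊗ₖ (Matrix.single (γ 1) (γ 2) (1 : ℂ))
        - (Matrix.single (γ 1) (γ 2) (1 : ℂ)) ⊗ₖ (Matrix.single (γ 0) (γ 1) (1 : ℂ)))

/-!
Δ(g h*) factors as `(π g ⊗ π g) · D_h` with `D_h` diagonal, and `𝔥` commutes with each factor.
`π g` is a permutation matrix `P_ρ`, and conjugating `𝔥` by `P_ρ ⊗ P_ρ` only relabels its
summands `γ ↦ ρ γ`. `D_h` has entry `1` at `(a, b)` exactly when `h = σ^(b - a)` (indices read in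
`ZMod 3`), while `𝔥` only connects `(γ 0, γ 1)` with `(γ 1, γ 2)` for permutations `γ`. Any
ordering of `ZMod 3` is an arithmetic progression, since its terms sum to `0 + 1 + 2 = 0`; hence
`γ 1 - γ 0 = γ 2 - γ 1` and both basis vectors carry the same diagonal entry.
-/

open Equiv DihedralGroup

lemma Matrix.single_mul_permMatrix {n R : Type*} [DecidableEq n] [Fintype n] [NonAssocSemiring R]
    (σ : Perm n) (i j : n) (c : R) :
    single i j c * σ.permMatrix R = σ.permMatrix R * single (σ i) (σ j) c := by
  ext a b
  simp [PEquiv.toMatrix_toPEquiv_mul, PEquiv.mul_toMatrix_toPEquiv, single_apply,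
    Equiv.eq_symm_apply]

lemma Matrix.permMatrix_pow {n R : Type*} [DecidableEq n] [Fintype n] [Semiring R]
    (σ : Perm n) (k : ℕ) : (σ ^ k).permMatrix R = σ.permMatrix R ^ k := by
  induction k with
  | zero => simp
  | succ k ih => rw [pow_succ', permMatrix_mul, ih, pow_succ]

lemma Matrix.commute_single_diagonal {n R : Type*} [DecidableEq n] [CommSemiring R]
    [Fintype n] {d : n → R} {i j : n} (c : R) (h : d i = d j) :
    Commute (single i j c) (diagonal d) := by
  ext a b
  simp only [mul_diagonal, diagonal_mul, single_apply]
  split_ifs with hab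
  · obtain ⟨rfl, rfl⟩ := hab
    rw [h, mul_comm]
  · simp

lemma DihedralGroup.inv_sr_mul_eq_sr_iff {n : ℕ} (i j : ZMod n) (g : DihedralGroup n) :
    (sr i)⁻¹ * g = sr j ↔ g = r (j - i) := by
  rw [inv_mul_eq_iff_eq_mul, sr_mul_sr]

lemma Equiv.Perm.finEquiv_apply_one_sub_apply_zero (γ : Perm (Fin 3)) :
    ZMod.finEquiv 3 (γ 1) - ZMod.finEquiv 3 (γ 0) =
      ZMod.finEquiv 3 (γ 2) - ZMod.finEquiv 3 (γ 1) := by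
  have hsum : ∑ x, ZMod.finEquiv 3 (γ x) = ∑ x, ZMod.finEquiv 3 x := Equiv.sum_comp γ _
  rw [Fin.sum_univ_three, Fin.sum_univ_three,
    show ZMod.finEquiv 3 0 + ZMod.finEquiv 3 1 + ZMod.finEquiv 3 2 = 0 from rfl] at hsum
  have hthree : (3 : ZMod 3) = 0 := rfl
  linear_combination -hsum + ZMod.finEquiv 3 (γ 1) * hthree

def hlocTerm (γ : Perm (Fin 3)) : Matrix (Fin 3 × Fin 3) (Fin 3 × Fin 3) ℂ :=
  Complex.I • (single (γ 0) (γ 1) 1 ⊗ₖ single (γ 1) (γ 2) 1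
    - single (γ 1) (γ 2) 1 ⊗ₖ single (γ 0) (γ 1) 1)

lemma hloc_eq_sum_hlocTerm : hloc = ∑ γ, hlocTerm γ := rfl

lemma hlocTerm_mul_kronecker_permMatrix (σ γ : Perm (Fin 3)) :
    hlocTerm γ * (σ.permMatrix ℂ ⊗ₖ σ.permMatrix ℂ) =
      (σ.permMatrix ℂ ⊗ₖ σ.permMatrix ℂ) * hlocTerm (σ * γ) := by
  simp only [hlocTerm, smul_mul_assoc, mul_smul_comm, sub_mul, mul_sub, ← mul_kronecker_mul,
    single_mul_permMatrix, Perm.mul_apply]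

lemma commute_hloc_kronecker_permMatrix (σ : Perm (Fin 3)) :
    Commute hloc (σ.permMatrix ℂ ⊗ₖ σ.permMatrix ℂ) := by
  rw [Commute, SemiconjBy, hloc_eq_sum_hlocTerm, Finset.sum_mul, Finset.mul_sum]
  simp_rw [hlocTerm_mul_kronecker_permMatrix]
  exact Equiv.sum_comp (Equiv.mulLeft σ) fun γ =>
    σ.permMatrix ℂ ⊗ₖ σ.permMatrix ℂ * hlocTerm γ

lemma hlocTerm_eq_single (γ : Perm (Fin 3)) :
    hlocTerm γ =
      Complex.I • (single (γ 0, γ 1) (γ 1, γ 2) 1 - single (γ 1, γ 0) (γ 2, γ 1) 1) := by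
  simp only [hlocTerm, single_kronecker_single, mul_one]

lemma commute_hloc_diagonal {d : Fin 3 × Fin 3 → ℂ}
    (hd : ∀ γ : Perm (Fin 3), d (γ 0, γ 1) = d (γ 1, γ 2)) : Commute hloc (diagonal d) := by
  rw [hloc_eq_sum_hlocTerm]
  refine Commute.sum_left _ _ _ fun γ _ => ?_
  -- `γ * swap 0 2` lists the values `γ 2, γ 1, γ 0`
  have hd' : d (γ 1, γ 0) = d (γ 2, γ 1) := (hd (γ * swap 0 2)).symm
  rw [hlocTerm_eq_single]
  exact ((commute_single_diagonal _ (hd γ)).sub_left (commute_single_diagonal _ hd')).smul_left _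

lemma Smat_eq_permMatrix : Smat = (finRotate 3).permMatrix ℂ := by
  ext i j
  fin_cases i <;> fin_cases j <;> simp [Smat, PEquiv.toMatrix_apply]

lemma Tmat_eq_permMatrix : Tmat = (swap 1 2).permMatrix ℂ := by
  ext i j
  fin_cases i <;> fin_cases j <;> simp [Tmat, PEquiv.toMatrix_apply, swap_apply_of_ne_of_ne]

lemma exists_pig_eq_permMatrix (g : DihedralGroup 3) :
    ∃ σ : Perm (Fin 3), pig g = σ.permMatrix ℂ := by
  rcases g with i | i
  · exact ⟨finRotate 3 ^ i.val, by rw [pig, permMatrix_pow, Smat_eq_permMatrix]⟩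
  · exact ⟨finRotate 3 ^ i.val * swap 1 2, by
      rw [pig, permMatrix_mul, permMatrix_pow, Smat_eq_permMatrix, Tmat_eq_permMatrix]⟩

lemma pidual_eq_diagonal (k : DihedralGroup 3) :
    pidual k = diagonal fun a => if k = sr (-ZMod.finEquiv 3 a) then 1 else 0 := by
  rcases k with j | j
  · simp [pidual]
  · change single ((ZMod.finEquiv 3).symm (-j)) ((ZMod.finEquiv 3).symm (-j)) 1 = _
    rw [← diagonal_single]
    congr 1
    funext a
    rw [Pi.single_apply]
    exact if_congr (by rw [RingEquiv.eq_symm_apply, sr.injEq, eq_comm, neg_eq_iff_eq_neg]) rfl rfl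

def coproductDualWeight (h : DihedralGroup 3) (p : Fin 3 × Fin 3) : ℂ :=
  if h = r (ZMod.finEquiv 3 p.2 - ZMod.finEquiv 3 p.1) then 1 else 0

lemma sum_pidual_kronecker_pidual (h : DihedralGroup 3) :
    ∑ k, pidual (k⁻¹ * h) ⊗ₖ pidual k = diagonal (coproductDualWeight h) := by
  simp only [pidual_eq_diagonal, diagonal_kronecker_diagonal, mul_ite, mul_one, mul_zero]
  refine (map_sum (diagonalAddMonoidHom (Fin 3 × Fin 3) ℂ) _ Finset.univ).symm.trans ?_
  rw [diagonalAddMonoidHom_apply]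
  congr 1
  funext p
  simp only [Finset.sum_apply, Finset.sum_ite_eq', Finset.mem_univ, if_true,
    inv_sr_mul_eq_sr_iff, neg_sub_neg, coproductDualWeight]

lemma copr_eq_kronecker_mul_diagonal (g h : DihedralGroup 3) :
    copr g h = (pig g ⊗ₖ pig g) * diagonal (coproductDualWeight h) := by
  rw [copr, ← sum_pidual_kronecker_pidual, Finset.mul_sum]
  exact Finset.sum_congr rfl fun k _ => mul_kronecker_mul _ _ _ _

lemma commute_hloc_diagonal_coproductDualWeight (h : DihedralGroup 3) :
    Commute hloc (diagonal (coproductDualWeight h)) :=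
  commute_hloc_diagonal fun γ => by
    rw [coproductDualWeight, coproductDualWeight, Perm.finEquiv_apply_one_sub_apply_zero]

/-- the local Hamiltonian commutes with the coproduct action:
𝔥 · Δ(g h*) = Δ(g h*) · 𝔥 for all g, h ∈ D₃. -/
theorem hloc_commutes_coproduct (g h : DihedralGroup 3) :
    hloc * copr g h = copr g h * hloc := by
  obtain ⟨σ, hσ⟩ := exists_pig_eq_permMatrix g
  rw [copr_eq_kronecker_mul_diagonal, hσ]
  exact ((commute_hloc_kronecker_permMatrix σ).mul_right
    (commute_hloc_diagonal_coproductDualWeight h)).eq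

end
end

section
/- The vector s = e₁⊗e₁ + e₂⊗e₂ + e₃⊗e₃ ∈ ℂ³⊗ℂ³ spans a trivial D(D₃)-module: for all g, h ∈ D₃, Δ(g h*)·s = ε(g h*)·s, where ε(g h*) = 1 if h = e and 0 otherwise. -/
open Matrix
open scoped Kronecker

noncomputable section

/-- The vector s = e₁⊗e₁ + e₂⊗e₂ + e₃⊗e₃ ∈ ℂ³⊗ℂ³. -/
def svec : Fin 3 × Fin 3 → ℂ := fun p => if p.1 = p.2 then 1 else 0

/-!
Write `s = vec 1`. Since `(B ⊗ A) vec X = vec (A X Bᵀ)`, the action of `g h*` on `s` is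
`vec (π(g) (∑ₖ π(k*) π((k⁻¹h)*)) π(g)ᵀ)`. The dual elements act by orthogonal idempotents that
sum to `1` and vanish off the involutions `σⁱτ`, so `π(k*) π((k⁻¹h)*)` is nonzero only when
`k⁻¹h = k`, i.e. `h = k² = e`; hence the inner sum is `ε(h*) • 1`. Finally `π(g)` is a permutation
matrix, so `π(g) π(g)ᵀ = 1`.
-/

section OrthogonalIdempotents

variable {G A : Type*} [Group G] [Fintype G] [DecidableEq G] [Semiring A]

theorem sum_mul_inv_mul_eq_ite_one (D : G → A)
    (hmul : ∀ a b, D a * D b = if a = b then D a else 0)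
    (hsupp : ∀ k, D k ≠ 0 → k * k = 1) (hsum : ∑ k, D k = 1) (h : G) :
    ∑ k, D k * D (k⁻¹ * h) = if h = 1 then 1 else 0 := by
  have hterm : ∀ k, D k * D (k⁻¹ * h) = if h = 1 then D k else 0 := by
    intro k
    by_cases hk : D k = 0
    · simp [hk]
    simp only [hmul, eq_inv_mul_iff_mul_eq, hsupp k hk]
    exact if_congr eq_comm rfl rfl
  simp_rw [hterm]
  split_ifs
  · exact hsum
  · exact Finset.sum_const_zero

end OrthogonalIdempotents

section Orthogonal

variable {n R : Type*} [Fintype n] [DecidableEq n] [CommSemiring R]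

theorem Matrix.mul_mul_transpose_eq_one {A B : Matrix n n R} (hA : A * Aᵀ = 1)
    (hB : B * Bᵀ = 1) : A * B * (A * B)ᵀ = 1 := by
  rw [transpose_mul, Matrix.mul_assoc, ← Matrix.mul_assoc B, hB, Matrix.one_mul, hA]

theorem Matrix.pow_mul_transpose_eq_one {A : Matrix n n R} (hA : A * Aᵀ = 1) (k : ℕ) :
    A ^ k * (A ^ k)ᵀ = 1 := by
  induction k with
  | zero => simp
  | succ k ih => rw [pow_succ]; exact mul_mul_transpose_eq_one ih hA

end Orthogonal

theorem Smat_mul_transpose_self : Smat * Smatᵀ = 1 := by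
  ext i j; fin_cases i <;> fin_cases j <;> simp [Smat, mul_apply, Fin.sum_univ_three]

theorem Tmat_mul_transpose_self : Tmat * Tmatᵀ = 1 := by
  ext i j; fin_cases i <;> fin_cases j <;> simp [Tmat, mul_apply, Fin.sum_univ_three]

theorem pig_mul_transpose_self (g : DihedralGroup 3) : pig g * (pig g)ᵀ = 1 := by
  cases g with
  | r _ => exact pow_mul_transpose_eq_one Smat_mul_transpose_self _
  | sr _ =>
    exact mul_mul_transpose_eq_one Tmat_mul_transpose_self
      (pow_mul_transpose_eq_one Smat_mul_transpose_self _)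

def srIndex : ZMod 3 ≃ Fin 3 := (Equiv.neg _).trans (ZMod.finEquiv 3).symm.toEquiv

theorem pidual_sr (j : ZMod 3) : pidual (.sr j) = single (srIndex j) (srIndex j) 1 := rfl

theorem pidual_mul_pidual (a b : DihedralGroup 3) :
    pidual a * pidual b = if a = b then pidual a else 0 := by
  cases a with
  | r _ => simp [pidual]
  | sr i =>
    cases b with
    | r _ => simp [pidual]
    | sr j =>
      rw [pidual_sr, pidual_sr]
      by_cases hij : i = j
      · simp [hij]
      · rw [single_mul_single_of_ne (h := srIndex.injective.ne hij), if_neg (by simpa using hij)]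

theorem transpose_pidual (a : DihedralGroup 3) : (pidual a)ᵀ = pidual a := by
  cases a with
  | r _ => simp [pidual]
  | sr j => rw [pidual_sr, transpose_single]

theorem mul_self_eq_one_of_pidual_ne_zero (k : DihedralGroup 3) (hk : pidual k ≠ 0) :
    k * k = 1 := by
  cases k with
  | r _ => exact absurd rfl hk
  | sr j => exact DihedralGroup.sr_mul_self j

theorem sum_pidual : ∑ k, pidual k = 1 := by
  rw [← (DihedralGroup.equivSum (n := 3)).symm.sum_comp, Fintype.sum_sum_type]
  simp only [DihedralGroup.equivSum_symm_apply, pidual_sr]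
  rw [srIndex.sum_comp (fun i => single i i (1 : ℂ)), sum_single_one]
  simp [pidual]

theorem sum_pidual_mul_pidual (h : DihedralGroup 3) :
    ∑ k, pidual k * pidual (k⁻¹ * h) = if h = 1 then 1 else 0 :=
  sum_mul_inv_mul_eq_ite_one pidual pidual_mul_pidual mul_self_eq_one_of_pidual_ne_zero
    sum_pidual h

theorem svec_eq_vec_one : svec = vec 1 := by
  ext ⟨i, j⟩
  simp [svec, vec, one_apply, eq_comm]

/-- s spans a trivial D(D₃)-module:
Δ(g h*)·s = ε(g h*)·s where ε(g h*) = 1 if h = e and 0 otherwise. -/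
theorem svec_trivial_module (g h : DihedralGroup 3) :
    (copr g h).mulVec svec = (if h = 1 then (1 : ℂ) else 0) • svec := by
  have hcopr : (copr g h) *ᵥ vec 1 =
      vec (pig g * (∑ k, pidual k * pidual (k⁻¹ * h)) * (pig g)ᵀ) := by
    simp only [copr, sum_mulVec, kronecker_mulVec_vec, ← vec_sum, Matrix.mul_one, transpose_mul,
      transpose_pidual, Finset.mul_sum, Finset.sum_mul, Matrix.mul_assoc]
  rw [svec_eq_vec_one, hcopr, sum_pidual_mul_pidual]
  split_ifs
  · rw [Matrix.mul_one, pig_mul_transpose_self, one_smul]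
  · rw [Matrix.mul_zero, Matrix.zero_mul, zero_smul, vec_zero]

end
end

section
/- Let L ≥ 1 and N ≥ 1 be integers and let y₁,…,y_N be pairwise distinct complex numbers. Define, for x ∈ ℂ with x ≠ i y_j for all j, λ(x) = (ω⁻¹x+1)^L ∏_{j=1}^N (ωx − i y_j)/(x − i y_j) + (ωx−1)^L ∏_{j=1}^N (ω⁻¹x − i y_j)/(x − i y_j). Then there exists a polynomial p with p(x) = λ(x) for all such x if and only if the Bethe ansatz equations hold: for every j ∈ {1,…,N}, (i ω⁻¹ y_j + 1)^L ∏_{k=1}^N (ω y_j − y_k) + (i ω y_j − 1)^L ∏_{k=1}^N (ω⁻¹ y_j − y_k) = 0. -/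
noncomputable section

open Polynomial Complex

section DivByRoots

variable {K ι : Type*} [Field K] [Fintype ι]

theorem exists_eval_eq_div_prod_X_sub_iff [Infinite K] {a : ι → K} (ha : Function.Injective a)
    (F : K[X]) :
    (∃ p : K[X], ∀ x, (∀ j, x ≠ a j) → p.eval x = F.eval x / ∏ j, (x - a j)) ↔
      ∀ j, F.IsRoot (a j) := by
  have hprod_ne : ∀ x, (∀ j, x ≠ a j) → ∏ j, (x - a j) ≠ 0 := fun x hx =>
    Finset.prod_ne_zero_iff.mpr fun j _ => sub_ne_zero.mpr (hx j)
  constructor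
  · rintro ⟨p, hp⟩ j
    have hagree : (Set.range a)ᶜ ⊆ {x | (p * ∏ j, (X - C (a j))).eval x = F.eval x} := by
      intro x hx
      have hx' : ∀ j, x ≠ a j := fun j h => hx ⟨j, h.symm⟩
      simp only [Set.mem_ofPred_eq, eval_mul, eval_prod, eval_sub, eval_X, eval_C, hp x hx']
      exact div_mul_cancel₀ _ (hprod_ne x hx')
    have hF : p * ∏ j, (X - C (a j)) = F :=
      eq_of_infinite_eval_eq _ _ ((Set.finite_range a).infinite_compl.mono hagree)
    rw [← hF, IsRoot, eval_mul, eval_prod]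
    exact mul_eq_zero_of_right _ (Finset.prod_eq_zero (Finset.mem_univ j) (by simp))
  · intro hroots
    obtain ⟨q, hq⟩ : ∏ j, (X - C (a j)) ∣ F :=
      Fintype.prod_dvd_of_coprime (pairwise_coprime_X_sub_C ha) fun j =>
        dvd_iff_isRoot.mpr (hroots j)
    refine ⟨q, fun x hx => ?_⟩
    rw [hq, eval_mul, eval_prod]
    simp only [eval_sub, eval_X, eval_C]
    exact (mul_div_cancel_left₀ _ (hprod_ne x hx)).symm

end DivByRoots

def eigenvalueNumerator {N : ℕ} (L : ℕ) (y : Fin N → ℂ) : ℂ[X] :=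
  (C ω⁻¹ * X + 1) ^ L * ∏ j, (C ω * X - C (I * y j))
    + (C ω * X - 1) ^ L * ∏ j, (C ω⁻¹ * X - C (I * y j))

section EigenvalueNumerator

variable {N : ℕ} (L : ℕ) (y : Fin N → ℂ)

theorem eigenvalue_eq_eval_numerator_div (x : ℂ) :
    (ω⁻¹ * x + 1) ^ L * ∏ j, (ω * x - I * y j) / (x - I * y j)
        + (ω * x - 1) ^ L * ∏ j, (ω⁻¹ * x - I * y j) / (x - I * y j)
      = (eigenvalueNumerator L y).eval x / ∏ j, (x - I * y j) := by
  simp only [eigenvalueNumerator, eval_add, eval_mul, eval_pow, eval_prod, eval_sub, eval_C,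
    eval_X, eval_one, Finset.prod_div_distrib]
  ring

omit L in
theorem prod_mul_I_mul_sub_I_mul (c : ℂ) (j : Fin N) :
    ∏ k, (c * (I * y j) - I * y k) = I ^ N * ∏ k, (c * y j - y k) := by
  have hpow : I ^ N = ∏ _k : Fin N, I := by simp
  rw [hpow, ← Finset.prod_mul_distrib]
  exact Finset.prod_congr rfl fun k _ => by ring

theorem eval_eigenvalueNumerator_I_mul (j : Fin N) :
    (eigenvalueNumerator L y).eval (I * y j) =
      I ^ N * ((I * ω⁻¹ * y j + 1) ^ L * ∏ k, (ω * y j - y k)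
        + (I * ω * y j - 1) ^ L * ∏ k, (ω⁻¹ * y j - y k)) := by
  simp only [eigenvalueNumerator, eval_add, eval_mul, eval_pow, eval_prod, eval_sub, eval_C,
    eval_X, eval_one, prod_mul_I_mul_sub_I_mul]
  ring

end EigenvalueNumerator

theorem polynomial_iff_bethe_general (L N : ℕ)
    (y : Fin N → ℂ) (hy : Function.Injective y) :
    (∃ p : Polynomial ℂ, ∀ x : ℂ, (∀ j, x ≠ Complex.I * y j) →
        p.eval x =
          (ω⁻¹ * x + 1) ^ L * ∏ j, (ω * x - Complex.I * y j) / (x - Complex.I * y j)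
            + (ω * x - 1) ^ L * ∏ j, (ω⁻¹ * x - Complex.I * y j) / (x - Complex.I * y j))
      ↔ (∀ j, (Complex.I * ω⁻¹ * y j + 1) ^ L * ∏ k, (ω * y j - y k)
            + (Complex.I * ω * y j - 1) ^ L * ∏ k, (ω⁻¹ * y j - y k) = 0) := by
  have hIy : Function.Injective fun j => I * y j := (mul_right_injective₀ I_ne_zero).comp hy
  simp only [eigenvalue_eq_eval_numerator_div]
  rw [exists_eval_eq_div_prod_X_sub_iff hIy]
  simp only [IsRoot, eval_eigenvalueNumerator_I_mul, mul_eq_zero, pow_eq_zero_iff',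
    I_ne_zero, false_and, false_or]

/-- the eigenvalue expression
λ(x) = (ω⁻¹x+1)^L ∏_j (ωx−iy_j)/(x−iy_j) + (ωx−1)^L ∏_j (ω⁻¹x−iy_j)/(x−iy_j)
extends to a polynomial in x if and only if the Bethe ansatz equations
(iω⁻¹y_j+1)^L ∏_k (ωy_j−y_k) + (iωy_j−1)^L ∏_k (ω⁻¹y_j−y_k) = 0 hold for all j. -/
theorem polynomial_iff_bethe (L N : ℕ) (hL : 1 ≤ L) (hN : 1 ≤ N)
    (y : Fin N → ℂ) (hy : Function.Injective y) :
    (∃ p : Polynomial ℂ, ∀ x : ℂ, (∀ j, x ≠ Complex.I * y j) →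
        p.eval x =
          (ω⁻¹ * x + 1) ^ L * ∏ j, (ω * x - Complex.I * y j) / (x - Complex.I * y j)
            + (ω * x - 1) ^ L * ∏ j, (ω⁻¹ * x - Complex.I * y j) / (x - Complex.I * y j))
      ↔ (∀ j, (Complex.I * ω⁻¹ * y j + 1) ^ L * ∏ k, (ω * y j - y k)
            + (Complex.I * ω * y j - 1) ^ L * ∏ k, (ω⁻¹ * y j - y k) = 0) :=
  polynomial_iff_bethe_general L N y hy

end
end
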